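/- If Φ is continuously differentiable with Φ'(x) > 0 for all x, then the set of critical points of the Hopfield energy E coincides exactly with the set of equilibria of the Hopfield dynamics τẋ = -Dx + WΦ(x) + Bu with symmetric W. -/

import Mathlib

/-!
The `k`-th partial derivative of the energy is `-Φ'(x_k)` times the `k`-th component of
`-Dx + WΦ(x) + Bu`: by symmetry of `W` the quadratic term contributes `-Φ'(x_k) (WΦ(x))_k`,
and the integral term cancels the `d_k Φ(x_k)` produced by the product rule in
`(d_k x_k - (Bu)_k) Φ(x_k)`. Since `Φ' > 0`, the gradient vanishes exactly at the equilibria.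
-/

open Finset ContinuousLinearMap

section

variable {ι : Type*} [Fintype ι]

theorem hasFDerivAt_comp_apply {f : ℝ → ℝ} {f' : ℝ} {x : ι → ℝ} {i : ι}
    (hf : HasDerivAt f f' (x i)) :
    HasFDerivAt (fun v : ι → ℝ => f (v i)) (f' • proj (R := ℝ) (φ := fun _ : ι => ℝ) i) x :=
  hf.comp_hasFDerivAt x (hasFDerivAt_apply i x)

theorem hasFDerivAt_sum_comp_apply {f : ι → ℝ → ℝ} {f' : ι → ℝ} {x : ι → ℝ}
    (hf : ∀ i, HasDerivAt (f i) (f' i) (x i)) :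
    HasFDerivAt (fun v : ι → ℝ => ∑ i, f i (v i))
      (∑ i, f' i • proj (R := ℝ) (φ := fun _ : ι => ℝ) i) x :=
  HasFDerivAt.fun_sum fun i _ => hasFDerivAt_comp_apply (hf i)

theorem sum_smul_proj_eq_zero_iff [DecidableEq ι] {c : ι → ℝ} :
    ∑ i, c i • proj (R := ℝ) (φ := fun _ : ι => ℝ) i = 0 ↔ ∀ i, c i = 0 := by
  refine ⟨fun h k => ?_, fun h => by simp [h]⟩
  simpa [Pi.single_apply] using congr($h (Pi.single k 1))

theorem hasFDerivAt_sum_sum_mul_mul {W : Matrix ι ι ℝ} (hW : W.IsSymm) {φ : ℝ → ℝ}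
    (hφ : Differentiable ℝ φ) (x : ι → ℝ) :
    HasFDerivAt (fun v : ι → ℝ => ∑ i, ∑ j, φ (v i) * W i j * φ (v j))
      (∑ k, (2 * deriv φ (x k) * ∑ j, W k j * φ (x j)) •
        proj (R := ℝ) (φ := fun _ : ι => ℝ) k) x := by
  have hφx (i : ι) := hasFDerivAt_comp_apply (x := x) (i := i) (hφ (x i)).hasDerivAt
  refine (HasFDerivAt.fun_sum fun i _ => HasFDerivAt.fun_sum fun j _ =>
    ((hφx i).mul_const (W i j)).mul (hφx j)).congr_fderiv ?_
  ext v
  simp only [_root_.sum_apply, add_apply, smul_apply, proj_apply, smul_eq_mul, sum_add_distrib]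
  rw [sum_comm (f := fun i j => φ (x i) * W i j * (deriv φ (x j) * v j))]
  simp only [← sum_add_distrib, mul_sum, sum_mul]
  refine sum_congr rfl fun i _ => sum_congr rfl fun j _ => ?_
  rw [hW.apply i j]
  ring

noncomputable def hopfieldEnergy (W : Matrix ι ι ℝ) (d b : ι → ℝ) (Φ : ℝ → ℝ) (v : ι → ℝ) :
    ℝ :=
  -(1 / 2) * (∑ i, ∑ j, Φ (v i) * W i j * Φ (v j))
    + (∑ i, (d i * v i - b i) * Φ (v i))
    - ∑ i, d i * ∫ w in (0:ℝ)..(v i), Φ w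

/-- The Hopfield dynamics read `τ ẋ = hopfieldField W d b Φ x`. -/
def hopfieldField (W : Matrix ι ι ℝ) (d b : ι → ℝ) (Φ : ℝ → ℝ) (x : ι → ℝ) (i : ι) : ℝ :=
  -(d i * x i) + (∑ j, W i j * Φ (x j)) + b i

variable {W : Matrix ι ι ℝ} {d b : ι → ℝ} {Φ : ℝ → ℝ}

theorem hasFDerivAt_hopfieldEnergy (hW : W.IsSymm) (hΦ : Differentiable ℝ Φ) (x : ι → ℝ) :
    HasFDerivAt (hopfieldEnergy W d b Φ)
      (∑ k, (-(deriv Φ (x k) * hopfieldField W d b Φ x k)) •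
        proj (R := ℝ) (φ := fun _ : ι => ℝ) k) x := by
  have hlin := hasFDerivAt_sum_comp_apply fun i =>
    ((hasDerivAt_id (x i)).const_mul (d i) |>.sub_const (b i)).mul (hΦ (x i)).hasDerivAt
  have hint := hasFDerivAt_sum_comp_apply fun i =>
    (hΦ.continuous.integral_hasStrictDerivAt 0 (x i)).hasDerivAt.const_mul (d i)
  refine (((hasFDerivAt_sum_sum_mul_mul hW hΦ x).const_mul (-(1 / 2))).add hlin |>.sub hint)
    |>.congr_fderiv ?_
  simp only [smul_sum, smul_smul, ← sum_add_distrib, ← sum_sub_distrib, ← add_smul, ← sub_smul]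
  refine sum_congr rfl fun k _ => congrArg (· • _) ?_
  simp only [hopfieldField, id]
  ring

theorem fderiv_hopfieldEnergy_eq_zero_iff (hW : W.IsSymm) (hΦ : Differentiable ℝ Φ)
    (hΦ' : ∀ s, deriv Φ s ≠ 0) (x : ι → ℝ) :
    fderiv ℝ (hopfieldEnergy W d b Φ) x = 0 ↔ hopfieldField W d b Φ x = 0 := by
  classical
  rw [(hasFDerivAt_hopfieldEnergy hW hΦ x).fderiv, sum_smul_proj_eq_zero_iff, funext_iff]
  simp [hΦ']

end

theorem hopfield_critical_points_eq_equilibria_general {N M : ℕ}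
    (d : Fin N → ℝ)
    (W : Matrix (Fin N) (Fin N) ℝ) (hW : W.IsSymm)
    (B : Matrix (Fin N) (Fin M) ℝ) (u : Fin M → ℝ)
    (Φ : ℝ → ℝ) (hΦ : ContDiff ℝ 1 Φ) (hΦ' : ∀ s, 0 < deriv Φ s)
    (E : (Fin N → ℝ) → ℝ)
    (hE : ∀ v : Fin N → ℝ, E v =
      -(1 / 2) * (∑ i, ∑ j, Φ (v i) * W i j * Φ (v j))
        + (∑ i, (d i * v i - ∑ m, B i m * u m) * Φ (v i))
        - ∑ i, d i * ∫ w in (0:ℝ)..(v i), Φ w) :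
    ∀ x : Fin N → ℝ,
      fderiv ℝ E x = 0 ↔
      (∀ i, -(d i * x i) + (∑ j, W i j * Φ (x j)) + (∑ m, B i m * u m) = 0) := by
  obtain rfl : E = hopfieldEnergy W d (B.mulVec u) Φ := funext hE
  intro x
  exact (fderiv_hopfieldEnergy_eq_zero_iff hW (hΦ.differentiable one_ne_zero)
    (fun s => (hΦ' s).ne') x).trans funext_iff

/-- If `Φ` is `C¹` with `Φ' > 0` everywhere, then the critical points of the
Hopfield energy coincide exactly with the equilibria of the Hopfield dynamics
`τ ẋ = -Dx + WΦ(x) + Bu` with symmetric `W`. -/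
theorem hopfield_critical_points_eq_equilibria {N M : ℕ}
    (τ : ℝ) (hτ : 0 < τ)
    (d : Fin N → ℝ) (hd : ∀ i, 0 < d i)
    (W : Matrix (Fin N) (Fin N) ℝ) (hW : W.IsSymm)
    (B : Matrix (Fin N) (Fin M) ℝ) (u : Fin M → ℝ)
    (Φ : ℝ → ℝ) (hΦ : ContDiff ℝ 1 Φ) (hΦ' : ∀ s, 0 < deriv Φ s)
    (E : (Fin N → ℝ) → ℝ)
    (hE : ∀ v : Fin N → ℝ, E v =
      -(1 / 2) * (∑ i, ∑ j, Φ (v i) * W i j * Φ (v j))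
        + (∑ i, (d i * v i - ∑ m, B i m * u m) * Φ (v i))
        - ∑ i, d i * ∫ w in (0:ℝ)..(v i), Φ w) :
    ∀ x : Fin N → ℝ,
      fderiv ℝ E x = 0 ↔
      (∀ i, -(d i * x i) + (∑ j, W i j * Φ (x j)) + (∑ m, B i m * u m) = 0) :=
  hopfield_critical_points_eq_equilibria_general d W hW B u Φ hΦ hΦ' E hE
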